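/- Fix q with 0 < q < 1 and let λ₀, s₀ be real-valued functions on ℝ∖{0}. Suppose y : ℝ → ℝ satisfies (D_q²y)(x) = λ₀(x)(D_qy)(x) + s₀(x)y(x) for all x ≠ 0. Then for every n ≥ 0 and all x ≠ 0, (D_q^{n+2}y)(x) = λ_n(x)(D_qy)(x) + s_n(x)y(x). -/
import Mathlib


/-- The `q`-difference operator: `(D_q f)(x) = (f(x) - f(qx)) / ((1-q)x)`. -/
noncomputable def Dq (q : ℝ) (f : ℝ → ℝ) : ℝ → ℝ :=
  fun x => (f x - f (q * x)) / ((1 - q) * x)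

/-- The q-AIM sequences `(λ_n, s_n)` built from `(λ₀, s₀)`. -/
noncomputable def qdaim (q : ℝ) (l0 s0 : ℝ → ℝ) : ℕ → (ℝ → ℝ) × (ℝ → ℝ)
  | 0 => (l0, s0)
  | n + 1 =>
      (fun x => Dq q (qdaim q l0 s0 n).1 x + (qdaim q l0 s0 n).1 (q * x) * l0 x
          + (qdaim q l0 s0 n).2 (q * x),
       fun x => Dq q (qdaim q l0 s0 n).2 x + (qdaim q l0 s0 n).1 (q * x) * s0 x)

theorem stmt_14 (q : ℝ) (hq0 : 0 < q) (hq1 : q < 1) (l0 s0 : ℝ → ℝ) (y : ℝ → ℝ)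
    (hy : ∀ x : ℝ, x ≠ 0 → (Dq q)^[2] y x = l0 x * Dq q y x + s0 x * y x) :
    ∀ n : ℕ, ∀ x : ℝ, x ≠ 0 →
      (Dq q)^[n + 2] y x
        = (qdaim q l0 s0 n).1 x * Dq q y x + (qdaim q l0 s0 n).2 x * y x := by
  have h1q : (1 : ℝ) - q ≠ 0 := by linarith
  intro n
  induction n with
  | zero =>
    intro x hx
    simpa [qdaim] using hy x hx
  | succ n ih =>
    intro x hx
    have hqx : q * x ≠ 0 := mul_ne_zero (ne_of_gt hq0) hx
    -- basic facts
    have hyq : y (q * x) = y x - (1 - q) * x * Dq q y x := by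
      have h : Dq q y x * ((1 - q) * x) = y x - y (q * x) :=
        div_mul_cancel₀ _ (mul_ne_zero h1q hx)
      linarith
    have hDyq : Dq q y (q * x)
        = Dq q y x - (1 - q) * x * (l0 x * Dq q y x + s0 x * y x) := by
      have h2 := hy x hx
      have h3 : (Dq q)^[2] y x
          = (Dq q y x - Dq q y (q * x)) / ((1 - q) * x) := by
        simp [Function.iterate_succ_apply', Dq]
      rw [h3] at h2
      field_simp [mul_ne_zero h1q hx] at h2
      nlinarith [h2]
    have key : (Dq q)^[n + 1 + 2] y x
        = ((Dq q)^[n + 2] y x - (Dq q)^[n + 2] y (q * x)) / ((1 - q) * x) := by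
      have : n + 1 + 2 = (n + 2) + 1 := by ring
      rw [this, Function.iterate_succ_apply']
      rfl
    rw [key, ih x hx, ih (q * x) hqx, hDyq]
    simp only [qdaim, Dq]
    rw [hyq]
    field_simp
    ring
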